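/- Let G = (V, E) be a finite simple graph with E nonempty and with no isolated vertices, and let x : V → ℝ^d be node features with feature smoothness λ_f = 0, i.e., for every v ∈ V, Σ_{v'∈N_v} (x_v − x_{v'}) = 0. Define the degree-weighted empirical probability measure of contexts μ_C = Σ_{v∈V} (|N_v|/(2|E|)) · δ_{x_v} and of mean-aggregated surroundings μ_S = Σ_{v∈V} (|N_v|/(2|E|)) · δ_{m_v}, where m_v = (1/|N_v|) Σ_{v'∈N_v} x_{v'} and δ_p is the Dirac measure at p ∈ ℝ^d. Then μ_S = μ_C, and consequently the Kullback–Leibler divergence D_KL(μ_S ‖ μ_C) = 0. -/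

import Mathlib

open Finset MeasureTheory
open scoped ENNReal

/-- The Kullback–Leibler divergence `D_KL(μ ‖ ν) = ∫ log (dμ/dν) dμ`. -/
noncomputable def klDiv {α : Type*} [MeasurableSpace α] (μ ν : Measure α) : ℝ :=
  ∫ x, Real.log (μ.rnDeriv ν x).toReal ∂μ

theorem klDiv_self {α : Type*} [MeasurableSpace α] (μ : Measure α) [SigmaFinite μ] :
    klDiv μ μ = 0 := by
  have hlog : (fun y ↦ Real.log (μ.rnDeriv μ y).toReal) =ᵐ[μ] fun _ ↦ 0 :=
    (Measure.rnDeriv_self μ).mono fun y hy ↦ by simp [hy]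
  rw [klDiv, integral_congr_ae hlog, integral_zero]

theorem Finset.one_div_card_smul_sum_eq_of_sum_sub_eq_zero {ι E : Type*} [AddCommGroup E]
    [Module ℝ E] {s : Finset ι} (hs : s.Nonempty) {f : ι → E} {a : E}
    (h : ∑ i ∈ s, (a - f i) = 0) : (1 / (#s : ℝ)) • ∑ i ∈ s, f i = a := by
  rw [sum_sub_distrib, sum_const, sub_eq_zero] at h
  rw [← h, ← Nat.cast_smul_eq_nsmul ℝ, smul_smul, one_div,
    inv_mul_cancel₀ (Nat.cast_ne_zero.mpr hs.card_pos.ne'), one_smul]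

theorem MeasureTheory.isFiniteMeasure_sum_smul_dirac {ι α : Type*} [MeasurableSpace α]
    (s : Finset ι) {c : ι → ℝ≥0∞} (hc : ∀ i ∈ s, c i ≠ ∞) (p : ι → α) :
    IsFiniteMeasure (∑ i ∈ s, c i • Measure.dirac (p i)) := by
  constructor
  simp only [Measure.finsetSum_apply, Measure.smul_apply, measure_univ, smul_eq_mul, mul_one]
  exact ENNReal.sum_lt_top.2 fun i hi ↦ (hc i hi).lt_top

theorem SimpleGraph.degree_div_two_mul_card_edgeFinset_ne_top {V : Type*} [Fintype V]
    (G : SimpleGraph V) [DecidableRel G.Adj] (v : V) :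
    (G.degree v : ℝ≥0∞) / (2 * (#G.edgeFinset : ℝ≥0∞)) ≠ ∞ := by
  rw [Ne, ENNReal.div_eq_top]
  rintro (⟨hdeg, hE⟩ | ⟨htop, -⟩)
  · obtain ⟨w, hvw⟩ :=
      G.degree_pos_iff_exists_adj v |>.1 (by exact_mod_cast pos_iff_ne_zero.2 hdeg)
    have hcard : #G.edgeFinset ≠ 0 :=
      card_ne_zero_of_mem (G.mem_edgeFinset.2 hvw : s(v, w) ∈ G.edgeFinset)
    simp [hcard] at hE
  · exact ENNReal.natCast_ne_top _ htop

theorem surrounding_eq_context_of_smoothness_zero_general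
    {V : Type*} [Fintype V]
    (G : SimpleGraph V) [DecidableRel G.Adj]
    (hnoiso : ∀ v : V, (G.neighborFinset v).Nonempty)
    (d : ℕ) (x : V → Fin d → ℝ)
    (hsmooth : ∀ v : V, ∑ v' ∈ G.neighborFinset v, (x v - x v') = 0)
    (μC μS : Measure (Fin d → ℝ))
    (hμC : μC = ∑ v : V,
      ((G.degree v : ℝ≥0∞) / (2 * (G.edgeFinset.card : ℝ≥0∞))) • Measure.dirac (x v))
    (hμS : μS = ∑ v : V,
      ((G.degree v : ℝ≥0∞) / (2 * (G.edgeFinset.card : ℝ≥0∞))) •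
        Measure.dirac ((1 / ((G.degree v : ℝ))) • ∑ v' ∈ G.neighborFinset v, x v')) :
    μS = μC ∧ klDiv μS μC = 0 := by
  have hmean (v : V) :
      (1 / (G.degree v : ℝ)) • ∑ v' ∈ G.neighborFinset v, x v' = x v := by
    simpa only [G.card_neighborFinset_eq_degree] using
      one_div_card_smul_sum_eq_of_sum_sub_eq_zero (hnoiso v) (hsmooth v)
  have hSC : μS = μC := by
    rw [hμS, hμC]
    exact sum_congr rfl fun v _ ↦ by rw [hmean v]
  have : IsFiniteMeasure μC := hμC ▸ isFiniteMeasure_sum_smul_dirac _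
    (fun v _ ↦ G.degree_div_two_mul_card_edgeFinset_ne_top v) x
  exact ⟨hSC, hSC ▸ klDiv_self μC⟩

/-- For a finite graph with no isolated vertices and feature smoothness `λ_f = 0`
(i.e., `Σ_{v'∈N_v} (x_v − x_{v'}) = 0` for every node `v`), the degree-weighted
empirical distribution of the mean-aggregated surroundings coincides with that of
the contexts, and hence the Kullback–Leibler divergence between them is zero. -/
theorem surrounding_eq_context_of_smoothness_zero
    {V : Type*} [Fintype V] [DecidableEq V]
    (G : SimpleGraph V) [DecidableRel G.Adj] (hE : G.edgeFinset.Nonempty)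
    (hnoiso : ∀ v : V, (G.neighborFinset v).Nonempty)
    (d : ℕ) (x : V → Fin d → ℝ)
    (hsmooth : ∀ v : V, ∑ v' ∈ G.neighborFinset v, (x v - x v') = 0)
    (μC μS : Measure (Fin d → ℝ))
    (hμC : μC = ∑ v : V,
      ((G.degree v : ℝ≥0∞) / (2 * (G.edgeFinset.card : ℝ≥0∞))) • Measure.dirac (x v))
    (hμS : μS = ∑ v : V,
      ((G.degree v : ℝ≥0∞) / (2 * (G.edgeFinset.card : ℝ≥0∞))) •
        Measure.dirac ((1 / ((G.degree v : ℝ))) • ∑ v' ∈ G.neighborFinset v, x v')) :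
    μS = μC ∧ klDiv μS μC = 0 :=
  surrounding_eq_context_of_smoothness_zero_general G hnoiso d x hsmooth μC μS hμC hμS
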